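/- arXiv:1804.10200 — 2 statements merged into one kernel-verified Lean document; each statement's English description precedes it below -/
import Mathlib

section
/- Let σ : ℝ → ℝ be a rectified function, i.e., σ(x) = 0 for x ≤ 0 and σ(x) > 0 and σ strictly increasing for x > 0. Let t_1 < t_2 < ... < t_d be real numbers and set b_j = (t_{j-1} + t_j)/2 for j = 1, ..., d (with t_0 := t_1 - 1). Then the d×d matrix A with entries A_{ij} = σ(t_i - b_j) is lower triangular with nonzero diagonal entries, hence invertible. -/
/-!
Since `b_j` is the midpoint of `t_{j-1}` and `t_j`, we have `t_i ≤ t_{j-1} < b_j < t_j` for `i < j`.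
Hence `t_i - b_j ≤ 0` above the diagonal, where `σ` vanishes, and `t_j - b_j > 0` on the diagonal,
where `σ` is positive: the matrix is lower triangular with nonzero diagonal, so its determinant
is a nonzero product.
-/

open OrderDual

theorem Matrix.IsLowerTriangular.isUnit_of_diag_ne_zero {n K : Type*} [Fintype n] [LinearOrder n]
    [Field K] {M : Matrix n n K} (hM : M.IsLowerTriangular) (hdiag : ∀ i, M i i ≠ 0) :
    IsUnit M := by
  rw [Matrix.isUnit_iff_isUnit_det, Matrix.det_of_isLowerTriangular M hM, isUnit_iff_ne_zero]
  exact Finset.prod_ne_zero_iff.mpr fun i _ => hdiag i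

theorem isLowerTriangular_of_rectified {ι : Type*} [LinearOrder ι] {σ : ℝ → ℝ}
    (hσ0 : ∀ x : ℝ, x ≤ 0 → σ x = 0) {t b : ι → ℝ} (htb : ∀ i j, i < j → t i ≤ b j) :
    (Matrix.of fun i j => σ (t i - b j)).IsLowerTriangular :=
  fun i j hij => hσ0 _ (sub_nonpos.mpr (htb i j (toDual_lt_toDual.mp hij)))

/-- The node `t_{j-1}`, with the convention `t_0 = t_1 - 1` at the first index. -/
def prevNode {d : ℕ} (t : Fin d → ℝ) (j : Fin d) : ℝ :=
  if (j : ℕ) = 0 then t j - 1 else t ⟨(j : ℕ) - 1, lt_of_le_of_lt (Nat.sub_le _ _) j.isLt⟩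

section prevNode

variable {d : ℕ} {t : Fin d → ℝ}

theorem prevNode_lt (ht : StrictMono t) (j : Fin d) : prevNode t j < t j := by
  unfold prevNode
  split_ifs with hj
  · linarith
  · exact ht (Fin.lt_def.mpr (by simp only; omega))

theorem le_prevNode (ht : Monotone t) {i j : Fin d} (hij : i < j) : t i ≤ prevNode t j := by
  have hj : (j : ℕ) ≠ 0 := by rw [Fin.lt_def] at hij; omega
  rw [prevNode, if_neg hj]
  exact ht (Fin.le_def.mpr (by rw [Fin.lt_def] at hij; simp only; omega))

end prevNode

theorem stmt_5_general (d : ℕ) (σ : ℝ → ℝ)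
    (hσ0 : ∀ x : ℝ, x ≤ 0 → σ x = 0)
    (hσpos : ∀ x : ℝ, 0 < x → 0 < σ x)
    (t : Fin d → ℝ) (ht : StrictMono t)
    (b : Fin d → ℝ)
    (hb : ∀ j : Fin d, b j =
      ((if (j : ℕ) = 0 then t j - 1
        else t ⟨(j : ℕ) - 1, lt_of_le_of_lt (Nat.sub_le _ _) j.isLt⟩) + t j) / 2) :
    (∀ i j : Fin d, i < j → Matrix.of (fun i j => σ (t i - b j)) i j = 0) ∧
    (∀ i : Fin d, Matrix.of (fun i j => σ (t i - b j)) i i ≠ 0) ∧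
    IsUnit (Matrix.of (fun i j : Fin d => σ (t i - b j))) := by
  have hb' : ∀ j, b j = (prevNode t j + t j) / 2 := hb
  have hbt : ∀ j, b j < t j := fun j => by linarith [hb' j, prevNode_lt ht j]
  have htb : ∀ i j, i < j → t i ≤ b j := fun i j hij => by
    linarith [hb' j, le_prevNode ht.monotone hij, prevNode_lt ht j]
  have hlower := isLowerTriangular_of_rectified hσ0 htb
  have hdiag : ∀ i, σ (t i - b i) ≠ 0 := fun i => (hσpos _ (sub_pos.mpr (hbt i))).ne'
  exact ⟨fun i j hij => hlower (toDual_lt_toDual.mpr hij), hdiag, hlower.isUnit_of_diag_ne_zero hdiag⟩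

theorem stmt_5 (d : ℕ) (σ : ℝ → ℝ) (hσcont : Continuous σ)
    (hσ0 : ∀ x : ℝ, x ≤ 0 → σ x = 0)
    (hσmono : StrictMonoOn σ (Set.Ioi 0))
    (hσpos : ∀ x : ℝ, 0 < x → 0 < σ x)
    (t : Fin d → ℝ) (ht : StrictMono t)
    (b : Fin d → ℝ)
    (hb : ∀ j : Fin d, b j =
      ((if (j : ℕ) = 0 then t j - 1
        else t ⟨(j : ℕ) - 1, lt_of_le_of_lt (Nat.sub_le _ _) j.isLt⟩) + t j) / 2) :
    (∀ i j : Fin d, i < j → Matrix.of (fun i j => σ (t i - b j)) i j = 0) ∧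
    (∀ i : Fin d, Matrix.of (fun i j => σ (t i - b j)) i i ≠ 0) ∧
    IsUnit (Matrix.of (fun i j : Fin d => σ (t i - b j))) :=
  stmt_5_general d σ hσ0 hσpos t ht b hb
end

section
/- Let σ : ℝ → ℝ be rectified (σ(x) = 0 for x ≤ 0, σ strictly increasing and positive on (0,∞)). Given distinct points x_1, ..., x_d ∈ ℝ^p and arbitrary values y_1, ..., y_d ∈ ℝ, there exist a ∈ ℝ^p, b_1, ..., b_d ∈ ℝ, and m_1, ..., m_d ∈ ℝ such that for every i, Σ_{j=1}^d m_j σ(a·x_i − b_j) = y_i. That is, a one-hidden-layer neural network of width d with activation σ can interpolate any d data points with distinct inputs exactly. -/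
/-!
Choose a direction `a` on which the data points have pairwise distinct projections `c i = a ⬝ᵥ x i`
(possible since finitely many proper hyperplanes cannot cover `ℝ^p`), let `ε > 0` be at most every
positive gap `c j - c i`, and put the biases at `b j = c j - ε`. Then `σ (c i - b j)` vanishes
whenever `c i < c j`, so the matrix `(σ (c i - b j))` is triangular for the order of the `c i`, with
diagonal `σ ε > 0`; it is therefore invertible and the output weights `m` solve the linear system.
-/

open Function Filter Topology

theorem exists_dotProduct_ne_zero {K ι n : Type*} [Field K] [Infinite K] [Finite ι] [Fintype n]
    {v : ι → n → K} (hv : ∀ i, v i ≠ 0) : ∃ a : n → K, ∀ i, a ⬝ᵥ v i ≠ 0 := by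
  classical
  by_contra! h
  have hcover : ⋃ i, (LinearMap.ker ((dotProductBilin K K).flip (v i)) : Set (n → K)) =
      Set.univ :=
    Set.iUnion_eq_univ_iff.2 fun a => (h a).imp fun _ => id
  obtain ⟨i, hi⟩ := Subspace.exists_eq_top_of_iUnion_eq_univ hcover
  obtain ⟨k, hk⟩ := Function.ne_iff.1 (hv i)
  have : Pi.single k 1 ⬝ᵥ v i = 0 := LinearMap.congr_fun (LinearMap.ker_eq_top.1 hi) _
  exact hk (by simpa [single_dotProduct] using this)

theorem exists_injective_dotProduct {K ι n : Type*} [Field K] [Infinite K] [Finite ι] [Fintype n]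
    {x : ι → n → K} (hx : Injective x) : ∃ a : n → K, Injective fun i => a ⬝ᵥ x i := by
  obtain ⟨a, ha⟩ := exists_dotProduct_ne_zero (v := fun q : {q : ι × ι // q.1 ≠ q.2} =>
    x q.1.1 - x q.1.2) fun q => sub_ne_zero.2 (hx.ne q.2)
  refine ⟨a, fun i j hij => by_contra fun hne => ha ⟨(i, j), hne⟩ ?_⟩
  simp [dotProduct_sub, hij]

theorem exists_pos_le_sub_of_lt {ι : Type*} [Finite ι] (c : ι → ℝ) :
    ∃ ε > 0, ∀ i j, c i < c j → ε ≤ c j - c i := by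
  have hgap : ∀ i j, ∀ᶠ ε in 𝓝[>] (0 : ℝ), c i < c j → ε ≤ c j - c i := fun i j => by
    by_cases h : c i < c j
    · filter_upwards [nhdsWithin_le_nhds (eventually_le_nhds (sub_pos.2 h))] with ε hε _ using hε
    · exact .of_forall fun _ h' => absurd h' h
  obtain ⟨ε, hε, hle⟩ := (eventually_mem_nhdsWithin.and
    (eventually_all.2 fun i => eventually_all.2 (hgap i))).exists
  exact ⟨ε, hε, hle⟩

theorem Matrix.det_eq_prod_diag_of_injective {ι α R : Type*} [Fintype ι] [DecidableEq ι]
    [LinearOrder α] [CommRing R] (M : Matrix ι ι R) {c : ι → α} (hc : Injective c)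
    (h : ∀ i j, c i < c j → M i j = 0) : M.det = ∏ i, M i i := by
  let _ : LinearOrder ι := LinearOrder.lift' c hc
  convert Matrix.det_of_isLowerTriangular M fun i j hij => h i j hij

theorem Matrix.det_of_apply_sub_sub_eq_pow {ι : Type*} [Fintype ι] [DecidableEq ι] {σ : ℝ → ℝ}
    (hσ0 : ∀ t ≤ 0, σ t = 0) {c : ι → ℝ} (hc : Injective c) {ε : ℝ}
    (hε : ∀ i j, c i < c j → ε ≤ c j - c i) :
    (of fun i j => σ (c i - (c j - ε))).det = σ ε ^ Fintype.card ι := by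
  rw [det_eq_prod_diag_of_injective (of _) hc fun i j hij => hσ0 _ (by linarith [hε i j hij])]
  simp

theorem stmt_6_general (d p : ℕ) (σ : ℝ → ℝ)
    (hσ0 : ∀ x : ℝ, x ≤ 0 → σ x = 0)
    (hσpos : ∀ x : ℝ, 0 < x → 0 < σ x)
    (x : Fin d → (Fin p → ℝ)) (hx : Function.Injective x)
    (y : Fin d → ℝ) :
    ∃ (a : Fin p → ℝ) (b m : Fin d → ℝ),
      ∀ i : Fin d, ∑ j : Fin d, m j * σ (dotProduct a (x i) - b j) = y i := by
  obtain ⟨a, hc⟩ := exists_injective_dotProduct hx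
  set c := fun i => a ⬝ᵥ x i
  obtain ⟨ε, hε, hgap⟩ := exists_pos_le_sub_of_lt c
  set M := Matrix.of fun i j => σ (c i - (c j - ε))
  have hM : IsUnit M := by
    rw [M.isUnit_iff_isUnit_det, Matrix.det_of_apply_sub_sub_eq_pow hσ0 hc hgap]
    exact (pow_pos (hσpos ε hε) _).ne'.isUnit
  obtain ⟨m, hm⟩ := Matrix.mulVec_surjective_iff_isUnit.2 hM y
  refine ⟨a, fun j => c j - ε, m, fun i => ?_⟩
  rw [← hm]
  exact Finset.sum_congr rfl fun j _ => mul_comm _ _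

theorem stmt_6 (d p : ℕ) (σ : ℝ → ℝ) (hσcont : Continuous σ)
    (hσ0 : ∀ x : ℝ, x ≤ 0 → σ x = 0)
    (hσmono : StrictMonoOn σ (Set.Ioi 0))
    (hσpos : ∀ x : ℝ, 0 < x → 0 < σ x)
    (x : Fin d → (Fin p → ℝ)) (hx : Function.Injective x)
    (y : Fin d → ℝ) :
    ∃ (a : Fin p → ℝ) (b m : Fin d → ℝ),
      ∀ i : Fin d, ∑ j : Fin d, m j * σ (dotProduct a (x i) - b j) = y i :=
  stmt_6_general d p σ hσ0 hσpos x hx y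
end
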